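/- For any combinatorial game G that has at least one Left option and at least one Right option, and any game H whose normal-play outcome is a Left win or a second-player win (H ∈ 𝓛⁺ ∪ 𝓟⁺), the ordinal sum G:H is greater than or equal to G under the misère-play partial order, i.e. for every game X, the misère outcome of G:H + X is at least the misère outcome of G + X in the outcome partial order. -/

import Mathlib

/-! Combinatorial game theory (`SetTheory.PGame`, `nim`, `Nimber`) has been removed from
Mathlib; the needed parts are restated here with their December 2024 definitions. -/

section PGameDefs

universe w

namespace SetTheory

inductive PGame : Type (w + 1)
  | mk : ∀ α β : Type w, (α → PGame) → (β → PGame) → PGame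

namespace PGame

def LeftMoves : PGame → Type w
  | mk l _ _ _ => l

def RightMoves : PGame → Type w
  | mk _ r _ _ => r

def moveLeft : ∀ g : PGame, LeftMoves g → PGame
  | mk _l _ L _ => L

def moveRight : ∀ g : PGame, RightMoves g → PGame
  | mk _ _r _ R => R

inductive IsOption : PGame → PGame → Prop
  | moveLeft {x : PGame} (i : x.LeftMoves) : IsOption (x.moveLeft i) x
  | moveRight {x : PGame} (i : x.RightMoves) : IsOption (x.moveRight i) x

theorem wf_isOption : WellFounded IsOption := ⟨fun x => by
  induction x with
  | mk l r L R IHl IHr =>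
    refine Acc.intro _ fun y h => ?_
    cases h with
    | moveLeft i => exact IHl i
    | moveRight j => exact IHr j⟩

def Subsequent : PGame → PGame → Prop :=
  Relation.TransGen IsOption

theorem wf_subsequent : WellFounded Subsequent :=
  wf_isOption.transGen

instance : WellFoundedRelation PGame :=
  ⟨_, wf_subsequent⟩

theorem Subsequent.moveLeft {x : PGame} (i : x.LeftMoves) : Subsequent (x.moveLeft i) x :=
  Relation.TransGen.single (IsOption.moveLeft i)

theorem Subsequent.moveRight {x : PGame} (j : x.RightMoves) : Subsequent (x.moveRight j) x :=
  Relation.TransGen.single (IsOption.moveRight j)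

instance : Zero PGame :=
  ⟨⟨PEmpty, PEmpty, PEmpty.elim, PEmpty.elim⟩⟩

instance : LE PGame :=
  ⟨@Sym2.GameAdd.recursion _ IsOption (fun _ _ => Prop) wf_isOption fun x y le =>
      (∀ i, ¬le y (x.moveLeft i) (Sym2.GameAdd.snd_fst <| IsOption.moveLeft i)) ∧
        ∀ j, ¬le (y.moveRight j) x (Sym2.GameAdd.fst_snd <| IsOption.moveRight j)⟩

instance : LT PGame :=
  ⟨fun x y => x ≤ y ∧ ¬y ≤ x⟩

def neg : PGame → PGame
  | ⟨l, r, L, R⟩ => ⟨r, l, fun i => neg (R i), fun i => neg (L i)⟩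

instance : Neg PGame :=
  ⟨neg⟩

def add (x y : PGame.{w}) : PGame.{w} :=
  ⟨x.LeftMoves ⊕ y.LeftMoves, x.RightMoves ⊕ y.RightMoves,
    Sum.elim (fun i => add (x.moveLeft i) y) (fun j => add x (y.moveLeft j)),
    Sum.elim (fun i => add (x.moveRight i) y) (fun j => add x (y.moveRight j))⟩
termination_by (x, y)
decreasing_by
  all_goals first
    | exact Prod.Lex.left _ _ (Subsequent.moveLeft _)
    | exact Prod.Lex.left _ _ (Subsequent.moveRight _)
    | exact Prod.Lex.right _ (Subsequent.moveLeft _)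
    | exact Prod.Lex.right _ (Subsequent.moveRight _)

instance : Add PGame.{w} :=
  ⟨add⟩

instance : Sub PGame :=
  ⟨fun x y => x + -y⟩

def star : PGame.{w} :=
  ⟨PUnit, PUnit, fun _ => 0, fun _ => 0⟩

noncomputable def nim (o : Ordinal.{w}) : PGame.{w} :=
  ⟨o.ToType, o.ToType,
    fun x => nim (Ordinal.ToType.mk.symm x).val,
    fun x => nim (Ordinal.ToType.mk.symm x).val⟩
termination_by o
decreasing_by all_goals exact (Ordinal.ToType.mk.symm x).prop

end PGame

end SetTheory

def Nimber : Type (w + 1) :=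
  Ordinal.{w}

noncomputable instance : ConditionallyCompleteLinearOrderBot Nimber :=
  inferInstanceAs (ConditionallyCompleteLinearOrderBot Ordinal)

instance : One Nimber :=
  ⟨(1 : Ordinal)⟩

end PGameDefs

open SetTheory PGame

universe u

/-- The four outcome classes of a combinatorial game. -/
inductive Outcome : Type
  | L | N | P | R
deriving DecidableEq

/-- The partial order on outcomes: `R` least, `L` greatest, `N` and `P` incomparable. -/
def Outcome.leB : Outcome → Outcome → Bool
  | .R, _ => true
  | _, .L => true
  | .N, .N => true
  | .P, .P => true
  | _, _ => false

instance : PartialOrder Outcome where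
  le a b := Outcome.leB a b = true
  le_refl a := by cases a <;> rfl
  le_trans a b c := by cases a <;> cases b <;> cases c <;> simp [Outcome.leB]
  le_antisymm a b := by cases a <;> cases b <;> simp [Outcome.leB]

/-- `misereWins true G` : Left, moving first, wins `G` under misère play;
`misereWins false G` : Right, moving first, wins `G` under misère play.
(Under misère play, a player who cannot move wins.) -/
def misereWins : Bool → SetTheory.PGame.{u} → Prop
  | true, G => IsEmpty G.LeftMoves ∨ ∃ i, ¬ misereWins false (G.moveLeft i)
  | false, G => IsEmpty G.RightMoves ∨ ∃ j, ¬ misereWins true (G.moveRight j)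
termination_by _ G => G
decreasing_by all_goals first | exact Subsequent.moveLeft _ | exact Subsequent.moveRight _

/-- Build an outcome class from the propositions "Left moving first wins" and
"Right moving first wins". -/
noncomputable def outcomeOf (LF RF : Prop) : Outcome := by
  classical exact if LF then (if RF then .N else .L) else (if RF then .R else .P)

/-- The normal-play outcome `o⁺(G)` of a game. -/
noncomputable def normalOutcome (G : PGame) : Outcome :=
  outcomeOf (¬ G ≤ 0) (¬ 0 ≤ G)

/-- The misère-play outcome `o⁻(G)` of a game. -/
noncomputable def misereOutcome (G : PGame) : Outcome :=
  outcomeOf (misereWins true G) (misereWins false G)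

/-- The ordinal sum `G : H` of two games: either move in `G` (destroying the `H` part),
or move in `H` keeping the base `G`. -/
def ordinalSum (G : PGame.{u}) : PGame.{u} → PGame.{u}
  | H => PGame.mk (G.LeftMoves ⊕ H.LeftMoves) (G.RightMoves ⊕ H.RightMoves)
      (Sum.elim G.moveLeft fun i => ordinalSum G (H.moveLeft i))
      (Sum.elim G.moveRight fun j => ordinalSum G (H.moveRight j))
termination_by H => H
decreasing_by all_goals first | exact Subsequent.moveLeft _ | exact Subsequent.moveRight _

/-- The game `↑` (up) `= {0 | *}`. -/
def up : PGame.{u} := ⟨PUnit, PUnit, fun _ => 0, fun _ => star⟩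

/-- `n` copies of `↑` added together. -/
def nUp : ℕ → PGame.{u}
  | 0 => 0
  | n + 1 => nUp n + up

/-- The integer multiple `w·↑`. -/
def upMul : ℤ → PGame.{u}
  | .ofNat k => nUp k
  | .negSucc k => -(nUp (k + 1))

/-- Finite disjunctive sum of a family of games. -/
def psum : {k : ℕ} → (Fin k → PGame.{u}) → PGame.{u}
  | 0, _ => 0
  | k + 1, f => psum (fun i : Fin k => f i.castSucc) + f (Fin.last k)

/-- The superstar `{*x₁, …, *xₙ}`: the impartial game whose Left and Right options are
exactly the nimbers `*xᵢ`. -/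
noncomputable def superstar {n : ℕ} (x : Fin n → ℕ) : PGame :=
  ⟨Fin n, Fin n, fun i => nim (x i), fun i => nim (x i)⟩

/-- The minimum excludant of a set of naturals. -/
noncomputable def setMex (S : Set ℕ) : ℕ := sInf {n | n ∉ S}

/-- Iterated XOR (nim-sum) of a finite family of naturals. -/
def xorSum : {k : ℕ} → (Fin k → ℕ) → ℕ
  | 0, _ => 0
  | k + 1, f => xorSum (fun i : Fin k => f i.castSucc) ^^^ f (Fin.last k)

/-- A set of naturals is star-closed if it is closed under XOR with 1. -/
def StarClosedN (S : Set ℕ) : Prop := ∀ a ∈ S, a ^^^ 1 ∈ S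

/-- `G` is all-small (dicotic): in every subposition, either both players can move
or neither can. -/
def AllSmall (G : PGame) : Prop :=
  (Nonempty G.LeftMoves ↔ Nonempty G.RightMoves) ∧
    ∀ p, Subsequent p G → (Nonempty p.LeftMoves ↔ Nonempty p.RightMoves)

/-- `G` has (integer) atomic weight `w`, via the remote-star characterization:
for all sufficiently remote `N`, `*N + ↓ < G - w·↑ < *N + ↑`. -/
def HasIntAtomicWeight (G : PGame) (w : ℤ) : Prop :=
  ∃ N₀ : ℕ, ∀ N : ℕ, N₀ ≤ N →
    nim N + (-up) < G - upMul w ∧ G - upMul w < nim N + up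

open Classical in
/-- The misère Grundy value of an (impartial) game: the mex of the misère Grundy values
of its options, except that the empty game has misère Grundy value `1`. -/
noncomputable def misereGrundy : PGame.{u} → Nimber.{u}
  | G =>
    if IsEmpty G.LeftMoves then 1
    else sInf (Set.range fun i => misereGrundy (G.moveLeft i))ᶜ
termination_by G => G
decreasing_by all_goals first | exact Subsequent.moveLeft _ | exact Subsequent.moveRight _

/-- A set of games closed under disjunctive sum and under taking subpositions. -/
def SClosed (A : Set PGame) : Prop :=
  (∀ G ∈ A, ∀ H ∈ A, G + H ∈ A) ∧ ∀ G ∈ A, ∀ G', Subsequent G' G → G' ∈ A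

/-- `K` is an evil kernel of `A`: setting `G* = G` for `G ∈ K` and `G* = G + *` otherwise,
one has `o⁺(G) = o⁻(G*)` and `o⁻(G) = o⁺(G*)` for all `G ∈ A`. -/
def IsEvilKernel (A K : Set PGame) : Prop :=
  K ⊆ A ∧ ∀ G ∈ A,
    (G ∈ K → normalOutcome G = misereOutcome G ∧ misereOutcome G = normalOutcome G) ∧
    (G ∉ K → normalOutcome G = misereOutcome (G + star) ∧
      misereOutcome G = normalOutcome (G + star))

/-- `(A, K)` is evilly normal: `A` is closed, `K` is an evil kernel of `A`, and
`G + H ∉ K ↔ (G ∉ K ∧ H ∉ K)` for all `G, H ∈ A`. -/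
def EvillyNormal (A K : Set PGame) : Prop :=
  SClosed A ∧ IsEvilKernel A K ∧ ∀ G ∈ A, ∀ H ∈ A, (G + H ∉ K ↔ G ∉ K ∧ H ∉ K)

/-- Normal-play equality of games: `G` and `H` have the same normal-play outcome in
every sum. -/
def NormalEq (G H : PGame) : Prop := ∀ X, normalOutcome (G + X) = normalOutcome (H + X)

namespace SetTheory
namespace PGame

theorem add_def (x y : PGame.{u}) : x + y = PGame.mk (x.LeftMoves ⊕ y.LeftMoves) (x.RightMoves ⊕ y.RightMoves)
    (Sum.elim (fun i => add (x.moveLeft i) y) (fun j => add x (y.moveLeft j)))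
    (Sum.elim (fun i => add (x.moveRight i) y) (fun j => add x (y.moveRight j))) := by
  show add x y = _
  rw [add]

@[simp] theorem moveLeft_mk {xl xr : Type u} {xL : xl → PGame.{u}} {xR : xr → PGame.{u}} :
    (PGame.mk xl xr xL xR).moveLeft = xL := rfl

@[simp] theorem moveRight_mk {xl xr : Type u} {xL : xl → PGame.{u}} {xR : xr → PGame.{u}} :
    (PGame.mk xl xr xL xR).moveRight = xR := rfl

theorem moveLeft_cast {z w : PGame.{u}} (h : z = w) (i : w.LeftMoves) :
    z.moveLeft (cast (congrArg LeftMoves h).symm i) = w.moveLeft i := by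
  subst h; rfl

theorem moveRight_cast {z w : PGame.{u}} (h : z = w) (i : w.RightMoves) :
    z.moveRight (cast (congrArg RightMoves h).symm i) = w.moveRight i := by
  subst h; rfl

def toLeftMovesAdd {x y : PGame.{u}} : x.LeftMoves ⊕ y.LeftMoves ≃ (x + y).LeftMoves :=
  Equiv.cast (congrArg LeftMoves (add_def x y)).symm

def toRightMovesAdd {x y : PGame.{u}} : x.RightMoves ⊕ y.RightMoves ≃ (x + y).RightMoves :=
  Equiv.cast (congrArg RightMoves (add_def x y)).symm

@[simp] theorem add_moveLeft_inl {x y : PGame.{u}} (i : x.LeftMoves) :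
    (x + y).moveLeft (toLeftMovesAdd (Sum.inl i)) = x.moveLeft i + y :=
  moveLeft_cast (add_def x y) (Sum.inl i)

@[simp] theorem add_moveLeft_inr {x y : PGame.{u}} (i : y.LeftMoves) :
    (x + y).moveLeft (toLeftMovesAdd (Sum.inr i)) = x + y.moveLeft i :=
  moveLeft_cast (add_def x y) (Sum.inr i)

@[simp] theorem add_moveRight_inl {x y : PGame.{u}} (i : x.RightMoves) :
    (x + y).moveRight (toRightMovesAdd (Sum.inl i)) = x.moveRight i + y :=
  moveRight_cast (add_def x y) (Sum.inl i)

@[simp] theorem add_moveRight_inr {x y : PGame.{u}} (i : y.RightMoves) :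
    (x + y).moveRight (toRightMovesAdd (Sum.inr i)) = x + y.moveRight i :=
  moveRight_cast (add_def x y) (Sum.inr i)

@[simp] theorem add_moveLeft_inl_mk {xl xr : Type u} {xL : xl → PGame.{u}} {xR : xr → PGame.{u}}
    {y : PGame.{u}} (i : xl) :
    (PGame.mk xl xr xL xR + y).moveLeft (toLeftMovesAdd (Sum.inl i)) = xL i + y :=
  add_moveLeft_inl (x := PGame.mk xl xr xL xR) i

@[simp] theorem add_moveRight_inl_mk {xl xr : Type u} {xL : xl → PGame.{u}} {xR : xr → PGame.{u}}
    {y : PGame.{u}} (i : xr) :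
    (PGame.mk xl xr xL xR + y).moveRight (toRightMovesAdd (Sum.inl i)) = xR i + y :=
  add_moveRight_inl (x := PGame.mk xl xr xL xR) i

theorem le_iff_forall_not_le {x y : PGame.{u}} :
    x ≤ y ↔ (∀ i, ¬ y ≤ x.moveLeft i) ∧ ∀ j, ¬ y.moveRight j ≤ x := by
  show @Sym2.GameAdd.recursion _ IsOption (fun _ _ => Prop) wf_isOption _ x y ↔ _
  rw [Sym2.GameAdd.recursion_eq]
  rfl

theorem zero_le {x : PGame.{u}} : 0 ≤ x ↔ ∀ j, ∃ i, 0 ≤ (x.moveRight j).moveLeft i := by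
  rw [le_iff_forall_not_le]
  have h0 : ∀ y : PGame.{u}, ¬ y ≤ 0 ↔ ∃ i, 0 ≤ y.moveLeft i := by
    intro y
    rw [le_iff_forall_not_le]
    constructor
    · intro h
      by_contra h'
      push_neg at h'
      exact h ⟨h', fun j => PEmpty.elim j⟩
    · rintro ⟨i, hi⟩ h
      exact h.1 i hi
  constructor
  · intro h j
    exact (h0 _).1 (h.2 j)
  · intro h
    exact ⟨fun i => PEmpty.elim i, fun j => (h0 _).2 (h j)⟩

end PGame
end SetTheory

lemma ordinalSum_def (G H : PGame.{u}) :
    ordinalSum G H = PGame.mk (G.LeftMoves ⊕ H.LeftMoves) (G.RightMoves ⊕ H.RightMoves)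
      (Sum.elim G.moveLeft fun i => ordinalSum G (H.moveLeft i))
      (Sum.elim G.moveRight fun j => ordinalSum G (H.moveRight j)) := by
  rw [ordinalSum]

lemma misereOutcome_le_of (A B : PGame)
    (h1 : misereWins true A → misereWins true B)
    (h2 : misereWins false B → misereWins false A) :
    misereOutcome A ≤ misereOutcome B := by
  unfold misereOutcome outcomeOf
  by_cases pA : misereWins true A <;> by_cases qA : misereWins false A <;>
    by_cases pB : misereWins true B <;> by_cases qB : misereWins false B <;>
    simp only [pA, qA, pB, qB, if_true, if_false] <;>
    first
      | rfl
      | exact absurd (h1 pA) pB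
      | exact absurd (h2 qB) qA

theorem ordinalSum_key (G : PGame.{u}) (hL : Nonempty G.LeftMoves)
    (hR : Nonempty G.RightMoves) (H X : PGame.{u}) (h : 0 ≤ H) :
    (misereWins true (G + X) → misereWins true (ordinalSum G H + X)) ∧
    (misereWins false (ordinalSum G H + X) → misereWins false (G + X)) := by
  rw [ordinalSum_def]
  constructor
  · intro hw
    rw [misereWins] at hw ⊢
    right
    rcases hw with hemp | ⟨i, hi⟩
    · exact hemp.elim (toLeftMovesAdd (Sum.inl hL.some))
    · obtain ⟨i', rfl⟩ := toLeftMovesAdd.surjective i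
      cases i' with
      | inl iG =>
        rw [add_moveLeft_inl] at hi
        refine ⟨toLeftMovesAdd (Sum.inl (Sum.inl iG)), ?_⟩
        simp only [add_moveLeft_inl, add_moveLeft_inl_mk, PGame.moveLeft_mk, Sum.elim_inl]
        exact hi
      | inr iX =>
        rw [add_moveLeft_inr] at hi
        refine ⟨toLeftMovesAdd (Sum.inr iX), ?_⟩
        rw [add_moveLeft_inr]
        intro hcon
        have := (ordinalSum_key G hL hR H (X.moveLeft iX) h).2
        rw [ordinalSum_def] at this
        exact hi (this hcon)
  · intro hw
    rw [misereWins] at hw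
    rcases hw with hemp | ⟨j, hj⟩
    · exact hemp.elim (toRightMovesAdd (Sum.inl (Sum.inl hR.some)))
    · obtain ⟨j', rfl⟩ := toRightMovesAdd.surjective j
      cases j' with
      | inl jS =>
        cases jS with
        | inl jG =>
          simp only [add_moveRight_inl, add_moveRight_inl_mk, PGame.moveRight_mk, Sum.elim_inl] at hj
          rw [misereWins]
          right
          refine ⟨toRightMovesAdd (Sum.inl jG), ?_⟩
          rw [add_moveRight_inl]
          exact hj
        | inr jH =>
          simp only [add_moveRight_inl, add_moveRight_inl_mk, PGame.moveRight_mk, Sum.elim_inr] at hj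
          obtain ⟨i, hi⟩ := PGame.zero_le.1 h jH
          rw [ordinalSum_def G (H.moveRight jH)] at hj
          rw [misereWins] at hj
          push_neg at hj
          have hall := hj.2
          have hmw : misereWins false
              (ordinalSum G ((H.moveRight jH).moveLeft i) + X) := by
            have := hall (toLeftMovesAdd (Sum.inl (Sum.inr i)))
            simpa only [add_moveLeft_inl, add_moveLeft_inl_mk, PGame.moveLeft_mk, Sum.elim_inr,
              not_not] using this
          exact (ordinalSum_key G hL hR ((H.moveRight jH).moveLeft i) X hi).2 hmw
      | inr jX =>
        rw [add_moveRight_inr] at hj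
        rw [misereWins]
        right
        refine ⟨toRightMovesAdd (Sum.inr jX), ?_⟩
        rw [add_moveRight_inr]
        intro hcon
        have := (ordinalSum_key G hL hR H (X.moveRight jX) h).1
        rw [ordinalSum_def] at this
        exact hj (this hcon)
termination_by (H, X)
decreasing_by
  all_goals first
    | exact Prod.Lex.right _ (Subsequent.moveLeft _)
    | exact Prod.Lex.right _ (Subsequent.moveRight _)
    | exact Prod.Lex.left _ _ (Relation.TransGen.head (IsOption.moveLeft _) (Subsequent.moveRight _))

/-- If `G` has at least one Left and one Right option and
`o⁺(H) ∈ {𝓛, 𝓟}`, then `G:H ≥⁻ G`: for every game `X`,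
`o⁻(G:H + X) ≥ o⁻(G + X)` in the partial order of outcomes. -/
theorem ordinalSum_misere_ge (G H : PGame)
    (hL : Nonempty G.LeftMoves) (hR : Nonempty G.RightMoves)
    (hH : normalOutcome H = Outcome.L ∨ normalOutcome H = Outcome.P) :
    ∀ X : PGame, misereOutcome (G + X) ≤ misereOutcome (ordinalSum G H + X) := by
  have h : 0 ≤ H := by
    by_contra hcon
    unfold normalOutcome outcomeOf at hH
    by_cases h1 : ¬ H ≤ 0 <;> simp only [h1, hcon, if_true, if_false] at hH <;>
      rcases hH with h' | h' <;> exact absurd h' (by decide)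
  intro X
  exact misereOutcome_le_of _ _ (ordinalSum_key G hL hR H X h).1
    (ordinalSum_key G hL hR H X h).2
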